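/- arXiv:2104.01866 — 2 statements merged into one kernel-verified Lean document; each statement's English description precedes it below -/
import Mathlib

section
/- Let f and φ be maps on the n-torus with ⫴f⫴_s and ‖φ‖_s finite, where ⫴·⫴_s is the strip-averaged L² norm with weights w_k(2s) and ‖·‖_s is the Wiener norm. Then for every 0 < α < 1, ⫴Df · φ⫴_{αs} ≤ (1/(e α^{n/2})) · (1/((1−α)s)) · ⫴f⫴_s · ‖φ‖_s. -/
open scoped BigOperators

noncomputable section

/-- ℓ¹-norm of an integer vector. -/
def l1 {n : ℕ} (k : Fin n → ℤ) : ℝ := ∑ i, |(k i : ℝ)|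

/-- sinh x / x, extended by 1 at x = 0. -/
def sr (x : ℝ) : ℝ := if x = 0 then 1 else Real.sinh x / x

/-- The weight w_k(t) = ∏ i, sinh (t k i) / (t k i). -/
def wt {n : ℕ} (t : ℝ) (k : Fin n → ℤ) : ℝ := ∏ i, sr (t * (k i : ℝ))

/-- Wiener (analytic) norm of a Fourier coefficient family. -/
def wiener {n : ℕ} (c : (Fin n → ℤ) → ℂ) (s : ℝ) : ℝ :=
  ∑' k, ‖c k‖ * Real.exp (s * l1 k)

/-- Strip-averaged L² norm of a Fourier coefficient family. -/
def stripL2 {n : ℕ} (c : (Fin n → ℤ) → ℂ) (s : ℝ) : ℝ :=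
  Real.sqrt (∑' k, ‖c k‖ ^ 2 * wt (2 * s) k)

/-!
The weight `wt t k = ∏ i, sinh (t kᵢ) / (t kᵢ)` is submultiplicative up to an exponential,
`wt t (k + l) ≤ wt t k * exp (t |l|)`, because `sinh x / x = ∫₀¹ cosh (x u) du` and
`cosh (x + y) ≤ cosh x * exp |y|`; and shrinking the width costs
`wt (α t) k ≤ α⁻ⁿ exp ((α - 1) t |k|) wt t k`, because `sinh y ≤ exp (y - x) sinh x` for `y ≤ x`.
The derivative multiplies the `k`-th coefficient by at most `|k|`, and
`|k| exp (-(1 - α) s |k|) ≤ 1 / (e (1 - α) s)`, so each weighted coefficient of `Df · φ` is bounded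
by a convolution of the weighted coefficients of `f` with those of `φ`. Young's inequality
`ℓ² * ℓ¹ → ℓ²` (weighted Cauchy–Schwarz, Tonelli, translation invariance) concludes. The sums are
taken in `ℝ≥0∞`, so that the summability of the left-hand side is a consequence of the bound.
-/

lemma sr_zero : sr 0 = 1 := if_pos rfl

lemma sr_of_ne_zero {x : ℝ} (hx : x ≠ 0) : sr x = Real.sinh x / x := if_neg hx

lemma sr_neg (x : ℝ) : sr (-x) = sr x := by
  simp [sr, Real.sinh_neg, neg_div_neg_eq]

lemma sr_abs (x : ℝ) : sr |x| = sr x := by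
  rcases abs_choice x with h | h <;> rw [h]
  exact sr_neg x

lemma sr_eq_integral_cosh (x : ℝ) : sr x = ∫ t in (0 : ℝ)..1, Real.cosh (x * t) := by
  rcases eq_or_ne x 0 with rfl | hx
  · simp [sr_zero]
  · rw [intervalIntegral.integral_comp_mul_left Real.cosh hx,
      intervalIntegral.integral_eq_sub_of_hasDerivAt (fun t _ => Real.hasDerivAt_sinh t)
        (Real.continuous_cosh.intervalIntegrable _ _), sr_of_ne_zero hx]
    simp [div_eq_inv_mul]

lemma sr_nonneg (x : ℝ) : 0 ≤ sr x := by
  rw [sr_eq_integral_cosh]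
  exact intervalIntegral.integral_nonneg zero_le_one fun t _ => (Real.cosh_pos _).le

lemma Real.cosh_add_le_cosh_mul_exp_abs (x y : ℝ) :
    Real.cosh (x + y) ≤ Real.cosh x * Real.exp |y| := by
  have h₁ : Real.exp y ≤ Real.exp |y| := Real.exp_le_exp.2 (le_abs_self y)
  have h₂ : Real.exp (-y) ≤ Real.exp |y| := Real.exp_le_exp.2 (neg_le_abs y)
  rw [Real.cosh_eq, Real.cosh_eq, neg_add, Real.exp_add, Real.exp_add]
  nlinarith [Real.exp_pos x, Real.exp_pos (-x)]

lemma sr_le_sr_mul_exp_abs_sub (u v : ℝ) : sr u ≤ sr v * Real.exp |u - v| := by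
  rw [sr_eq_integral_cosh, sr_eq_integral_cosh, ← intervalIntegral.integral_mul_const]
  refine intervalIntegral.integral_mono_on zero_le_one
    (Continuous.intervalIntegrable (by fun_prop) _ _)
    (Continuous.intervalIntegrable (by fun_prop) _ _) fun t ht => ?_
  calc Real.cosh (u * t) = Real.cosh (v * t + (u - v) * t) := by ring_nf
    _ ≤ Real.cosh (v * t) * Real.exp |(u - v) * t| := Real.cosh_add_le_cosh_mul_exp_abs _ _
    _ ≤ Real.cosh (v * t) * Real.exp |u - v| := by
      rw [abs_mul, abs_of_nonneg ht.1]
      gcongr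
      exact mul_le_of_le_one_right (abs_nonneg _) ht.2

lemma Real.sinh_le_exp_sub_mul_sinh {x y : ℝ} (hyx : y ≤ x) :
    Real.sinh y ≤ Real.exp (y - x) * Real.sinh x := by
  have h : Real.exp (y - x) ≤ Real.exp (x - y) := Real.exp_le_exp.2 (by linarith)
  rw [Real.sinh_eq, Real.sinh_eq, Real.exp_sub, Real.exp_neg, Real.exp_neg]
  rw [Real.exp_sub, Real.exp_sub] at h
  have := Real.exp_pos x
  have := Real.exp_pos y
  field_simp at h ⊢
  nlinarith

lemma sr_mul_le {a : ℝ} (ha₀ : 0 < a) (ha₁ : a ≤ 1) (x : ℝ) :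
    sr (a * x) ≤ 1 / a * Real.exp ((a - 1) * |x|) * sr x := by
  rw [← sr_abs (a * x), ← sr_abs x, abs_mul, abs_of_pos ha₀]
  rcases (abs_nonneg x).eq_or_lt' with hx | hx
  · rw [hx]
    simpa [sr_zero] using (one_le_inv₀ ha₀).2 ha₁
  · have hax : 0 < a * |x| := mul_pos ha₀ hx
    rw [sr_of_ne_zero hax.ne', sr_of_ne_zero hx.ne', div_le_iff₀ hax]
    calc Real.sinh (a * |x|) ≤ Real.exp (a * |x| - |x|) * Real.sinh |x| :=
          Real.sinh_le_exp_sub_mul_sinh (mul_le_of_le_one_left hx.le ha₁)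
      _ = _ := by
        rw [show a * |x| - |x| = (a - 1) * |x| by ring]
        field_simp

lemma Real.mul_exp_neg_mul_le {β : ℝ} (hβ : 0 < β) (r : ℝ) :
    r * Real.exp (-(β * r)) ≤ 1 / (Real.exp 1 * β) := by
  have h := Real.mul_exp_neg_le_exp_neg_one (β * r)
  rw [Real.exp_neg 1, mul_assoc, ← le_div_iff₀' hβ] at h
  simpa [div_eq_inv_mul, mul_comm] using h

lemma Real.rpow_natCast_div_two_sq {α : ℝ} (hα : 0 ≤ α) (n : ℕ) :
    (α ^ ((n : ℝ) / 2)) ^ 2 = α ^ n := by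
  rw [← Real.rpow_mul_natCast hα, Nat.cast_ofNat, div_mul_cancel₀ _ two_ne_zero,
    Real.rpow_natCast]

section Weights

variable {n : ℕ}

lemma l1_nonneg (k : Fin n → ℤ) : 0 ≤ l1 k :=
  Finset.sum_nonneg fun _ _ => abs_nonneg _

lemma wt_nonneg (t : ℝ) (k : Fin n → ℤ) : 0 ≤ wt t k :=
  Finset.prod_nonneg fun _ _ => sr_nonneg _

lemma wt_add_le {t : ℝ} (ht : 0 ≤ t) (k l : Fin n → ℤ) :
    wt t (k + l) ≤ wt t k * Real.exp (t * l1 l) := by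
  rw [wt, wt, l1, Finset.mul_sum, Real.exp_sum, ← Finset.prod_mul_distrib]
  refine Finset.prod_le_prod (fun _ _ => sr_nonneg _) fun i _ => ?_
  calc sr (t * ((k + l) i : ℝ))
      ≤ sr (t * k i) * Real.exp |t * ((k + l) i : ℝ) - t * k i| := sr_le_sr_mul_exp_abs_sub _ _
    _ = sr (t * k i) * Real.exp (t * |(l i : ℝ)|) := by
        rw [Pi.add_apply, Int.cast_add, show t * ((k i : ℝ) + l i) - t * k i = t * l i by ring,
          abs_mul, abs_of_nonneg ht]

lemma wt_mul_le {a t : ℝ} (ha₀ : 0 < a) (ha₁ : a ≤ 1) (ht : 0 ≤ t) (k : Fin n → ℤ) :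
    wt (a * t) k ≤ (1 / a) ^ n * Real.exp ((a - 1) * t * l1 k) * wt t k := by
  rw [wt, wt, l1, Finset.mul_sum, Real.exp_sum, ← Fin.prod_const, ← Finset.prod_mul_distrib,
    ← Finset.prod_mul_distrib]
  refine Finset.prod_le_prod (fun _ _ => sr_nonneg _) fun i _ => ?_
  calc sr (a * t * (k i : ℝ)) = sr (a * (t * k i)) := by rw [mul_assoc]
    _ ≤ 1 / a * Real.exp ((a - 1) * |t * k i|) * sr (t * k i) := sr_mul_le ha₀ ha₁ _
    _ = 1 / a * Real.exp ((a - 1) * t * |(k i : ℝ)|) * sr (t * k i) := by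
        rw [abs_mul, abs_of_nonneg ht, mul_assoc (a - 1)]

lemma l1_mul_sqrt_wt_add_le {s α : ℝ} (hs : 0 < s) (hα₀ : 0 < α) (hα₁ : α < 1)
    (k l : Fin n → ℤ) :
    l1 k * √(wt (2 * (α * s)) (k + l)) ≤
      1 / (Real.exp 1 * α ^ ((n : ℝ) / 2)) * (1 / ((1 - α) * s)) *
        (√(wt (2 * s) k) * Real.exp (s * l1 l)) := by
  set K := 1 / (Real.exp 1 * α ^ ((n : ℝ) / 2)) * (1 / ((1 - α) * s))
  have hK : K ^ 2 = (1 / (Real.exp 1 * ((1 - α) * s))) ^ 2 * (1 / α) ^ n := by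
    rw [mul_pow, div_pow, mul_pow, Real.rpow_natCast_div_two_sq hα₀.le]
    field_simp
    rw [one_div_pow, mul_one_div_cancel (pow_ne_zero _ hα₀.ne')]
  have hexp_two : ∀ x, Real.exp (2 * x) = Real.exp x ^ 2 := fun x => by
    rw [sq, ← Real.exp_add, two_mul]
  have hsq : l1 k ^ 2 * wt (2 * (α * s)) (k + l) ≤
      (K * Real.exp (s * l1 l)) ^ 2 * wt (2 * s) k := by
    calc l1 k ^ 2 * wt (2 * (α * s)) (k + l)
        ≤ l1 k ^ 2 * (wt (α * (2 * s)) k * Real.exp (2 * (α * s) * l1 l)) := by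
          rw [mul_left_comm α]
          gcongr
          exact wt_add_le (by positivity) k l
      _ ≤ l1 k ^ 2 * ((1 / α) ^ n * Real.exp ((α - 1) * (2 * s) * l1 k) * wt (2 * s) k *
            Real.exp (2 * (s * l1 l))) := by
          have hexp : Real.exp (2 * (α * s) * l1 l) ≤ Real.exp (2 * (s * l1 l)) :=
            Real.exp_le_exp.2 (by nlinarith [mul_nonneg hs.le (l1_nonneg l)])
          grw [wt_mul_le hα₀ hα₁.le (by positivity) k, hexp]
          exact mul_nonneg (by positivity) (wt_nonneg _ _)
      _ = (l1 k * Real.exp (-((1 - α) * s * l1 k))) ^ 2 * (1 / α) ^ n *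
            Real.exp (s * l1 l) ^ 2 * wt (2 * s) k := by
          rw [← hexp_two, mul_pow, ← hexp_two]
          ring_nf
      _ ≤ (1 / (Real.exp 1 * ((1 - α) * s))) ^ 2 * (1 / α) ^ n *
            Real.exp (s * l1 l) ^ 2 * wt (2 * s) k := by
          have := l1_nonneg k
          gcongr ?_ ^ 2 * _ * _ * _
          · exact wt_nonneg _ _
          · exact Real.mul_exp_neg_mul_le (mul_pos (sub_pos.2 hα₁) hs) _
      _ = (K * Real.exp (s * l1 l)) ^ 2 * wt (2 * s) k := by
          rw [mul_pow K, hK]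
  calc l1 k * √(wt (2 * (α * s)) (k + l))
      = √(l1 k ^ 2 * wt (2 * (α * s)) (k + l)) := by
        rw [Real.sqrt_mul (sq_nonneg _), Real.sqrt_sq (l1_nonneg k)]
    _ ≤ √((K * Real.exp (s * l1 l)) ^ 2 * wt (2 * s) k) := Real.sqrt_le_sqrt hsq
    _ = K * (√(wt (2 * s) k) * Real.exp (s * l1 l)) := by
        rw [Real.sqrt_mul (sq_nonneg _), Real.sqrt_sq (by positivity)]
        ring

end Weights

open MeasureTheory in
lemma ENNReal.tsum_mul_sq_le {ι : Type*} (F w : ι → ENNReal) :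
    (∑' i, F i * w i) ^ 2 ≤ (∑' i, F i ^ 2 * w i) * ∑' i, w i := by
  let _ : MeasurableSpace ι := ⊤
  have _ : MeasurableSingletonClass ι := ⟨fun _ => trivial⟩
  have h := ENNReal.lintegral_mul_norm_pow_le (μ := Measure.count)
    (f := fun i => F i ^ 2 * w i) (g := w) measurable_from_top.aemeasurable
    measurable_from_top.aemeasurable (p := 2⁻¹) (q := 2⁻¹) (by norm_num) (by norm_num)
    (by norm_num)
  have hroot (x : ENNReal) : (x ^ 2) ^ (2⁻¹ : ℝ) = x := by
    simpa using ENNReal.pow_rpow_inv_natCast two_ne_zero x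
  have hsq (x : ENNReal) : (x ^ (2⁻¹ : ℝ)) ^ 2 = x := by
    simpa using ENNReal.rpow_inv_natCast_pow two_ne_zero x
  have hterm (i : ι) : (F i ^ 2 * w i) ^ (2⁻¹ : ℝ) * w i ^ (2⁻¹ : ℝ) = F i * w i := by
    rw [← ENNReal.mul_rpow_of_nonneg _ _ (by norm_num), mul_assoc, ← sq, ← mul_pow, hroot]
  simp only [lintegral_count, hterm] at h
  calc (∑' i, F i * w i) ^ 2
      ≤ ((∑' i, F i ^ 2 * w i) ^ (2⁻¹ : ℝ) * (∑' i, w i) ^ (2⁻¹ : ℝ)) ^ 2 := by gcongr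
    _ = (∑' i, F i ^ 2 * w i) * ∑' i, w i := by rw [mul_pow, hsq, hsq]

lemma ENNReal.tsum_convolution_sq_le {G : Type*} [AddGroup G] (F w : G → ENNReal) :
    ∑' m, (∑' l, F (m - l) * w l) ^ 2 ≤ (∑' k, F k ^ 2) * (∑' l, w l) ^ 2 := by
  have htranslate (l : G) : ∑' m, F (m - l) ^ 2 = ∑' k, F k ^ 2 :=
    (Equiv.subRight l).tsum_eq fun k => F k ^ 2
  calc ∑' m, (∑' l, F (m - l) * w l) ^ 2
      ≤ ∑' m, (∑' l, F (m - l) ^ 2 * w l) * ∑' l, w l :=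
        ENNReal.tsum_le_tsum fun m => ENNReal.tsum_mul_sq_le _ _
    _ = (∑' l, (∑' m, F (m - l) ^ 2) * w l) * ∑' l, w l := by
        rw [ENNReal.tsum_mul_right, ENNReal.tsum_comm]
        simp_rw [ENNReal.tsum_mul_right]
    _ = (∑' k, F k ^ 2) * (∑' l, w l) ^ 2 := by
        simp_rw [htranslate, ENNReal.tsum_mul_left]
        ring

section Coefficients

variable {n : ℕ}

lemma ofReal_norm_sq_mul_wt (z : ℂ) (t : ℝ) (k : Fin n → ℤ) :
    ENNReal.ofReal (‖z‖ ^ 2 * wt t k) = ENNReal.ofReal (‖z‖ * √(wt t k)) ^ 2 := by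
  rw [← ENNReal.ofReal_pow (by positivity), mul_pow, Real.sq_sqrt (wt_nonneg _ _)]

lemma ofReal_stripL2_sq {c : (Fin n → ℤ) → ℂ} {s : ℝ}
    (hc : Summable fun k => ‖c k‖ ^ 2 * wt (2 * s) k) :
    ENNReal.ofReal (stripL2 c s ^ 2) = ∑' k, ENNReal.ofReal (‖c k‖ ^ 2 * wt (2 * s) k) := by
  have hnonneg (k : Fin n → ℤ) : 0 ≤ ‖c k‖ ^ 2 * wt (2 * s) k :=
    mul_nonneg (sq_nonneg _) (wt_nonneg _ _)
  rw [stripL2, Real.sq_sqrt (tsum_nonneg hnonneg), ENNReal.ofReal_tsum_of_nonneg hnonneg hc]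

lemma stripL2_le_of_tsum_ofReal_le {c : (Fin n → ℤ) → ℂ} {s C : ℝ} (hC : 0 ≤ C)
    (h : ∑' k, ENNReal.ofReal (‖c k‖ ^ 2 * wt (2 * s) k) ≤ ENNReal.ofReal (C ^ 2)) :
    stripL2 c s ≤ C := by
  have hnonneg (k : Fin n → ℤ) : 0 ≤ ‖c k‖ ^ 2 * wt (2 * s) k :=
    mul_nonneg (sq_nonneg _) (wt_nonneg _ _)
  have hc : Summable fun k => ‖c k‖ ^ 2 * wt (2 * s) k := by
    simpa only [ENNReal.toReal_ofReal (hnonneg _)] using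
      ENNReal.summable_toReal (h.trans_lt ENNReal.ofReal_lt_top).ne
  rw [← ENNReal.ofReal_tsum_of_nonneg hnonneg hc, ENNReal.ofReal_le_ofReal_iff (sq_nonneg C)] at h
  exact (Real.sqrt_le_left hC).2 h

lemma norm_sum_intCast_mul_le (k : Fin n → ℤ) (v : Fin n → ℂ) :
    ‖∑ j, (k j : ℂ) * v j‖ ≤ l1 k * ‖v‖ := by
  rw [l1, Finset.sum_mul]
  refine (norm_sum_le _ _).trans (Finset.sum_le_sum fun j _ => ?_)
  rw [norm_mul, Complex.norm_intCast]
  exact mul_le_mul_of_nonneg_left (norm_le_pi_norm v j) (abs_nonneg _)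

lemma ofReal_norm_conv_mul_sqrt_wt_le {t t' s K : ℝ}
    (hK : ∀ k l : Fin n → ℤ, l1 k * √(wt t (k + l)) ≤ K * (√(wt t' k) * Real.exp (s * l1 l)))
    (f : (Fin n → ℤ) → ℂ) (φ : (Fin n → ℤ) → (Fin n → ℂ)) (m : Fin n → ℤ) :
    ENNReal.ofReal (‖∑' l, Complex.I * (∑ j, ((m - l) j : ℂ) * φ l j) * f (m - l)‖ *
        √(wt t m)) ≤
      ENNReal.ofReal K * ∑' l, ENNReal.ofReal (‖f (m - l)‖ * √(wt t' (m - l))) *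
        ENNReal.ofReal (‖φ l‖ * Real.exp (s * l1 l)) := by
  have hterm (l : Fin n → ℤ) :
      ‖Complex.I * (∑ j, ((m - l) j : ℂ) * φ l j) * f (m - l)‖ * √(wt t m) ≤
        K * ((‖f (m - l)‖ * √(wt t' (m - l))) * (‖φ l‖ * Real.exp (s * l1 l))) := by
    calc ‖Complex.I * (∑ j, ((m - l) j : ℂ) * φ l j) * f (m - l)‖ * √(wt t m)
        ≤ l1 (m - l) * ‖φ l‖ * ‖f (m - l)‖ * √(wt t (m - l + l)) := by
          rw [norm_mul, norm_mul, Complex.norm_I, one_mul, sub_add_cancel]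
          gcongr
          exact norm_sum_intCast_mul_le _ _
      _ = l1 (m - l) * √(wt t (m - l + l)) * (‖φ l‖ * ‖f (m - l)‖) := by ring
      _ ≤ K * (√(wt t' (m - l)) * Real.exp (s * l1 l)) * (‖φ l‖ * ‖f (m - l)‖) :=
          mul_le_mul_of_nonneg_right (hK _ _) (by positivity)
      _ = K * ((‖f (m - l)‖ * √(wt t' (m - l))) * (‖φ l‖ * Real.exp (s * l1 l))) := by ring
  calc ENNReal.ofReal (‖∑' l, Complex.I * (∑ j, ((m - l) j : ℂ) * φ l j) * f (m - l)‖ *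
        √(wt t m))
      ≤ (∑' l, ‖Complex.I * (∑ j, ((m - l) j : ℂ) * φ l j) * f (m - l)‖ₑ) *
          ENNReal.ofReal √(wt t m) := by
        rw [ENNReal.ofReal_mul (norm_nonneg _), ofReal_norm]
        gcongr
        exact enorm_tsum_le_tsum_enorm
    _ = ∑' l, ENNReal.ofReal
          (‖Complex.I * (∑ j, ((m - l) j : ℂ) * φ l j) * f (m - l)‖ * √(wt t m)) := by
        rw [← ENNReal.tsum_mul_right]
        simp_rw [ENNReal.ofReal_mul (norm_nonneg _), ofReal_norm]
    _ ≤ ∑' l, ENNReal.ofReal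
          (K * ((‖f (m - l)‖ * √(wt t' (m - l))) * (‖φ l‖ * Real.exp (s * l1 l)))) :=
        ENNReal.tsum_le_tsum fun l => ENNReal.ofReal_le_ofReal (hterm l)
    _ = _ := by
        rw [← ENNReal.tsum_mul_left]
        refine tsum_congr fun l => ?_
        rw [ENNReal.ofReal_mul' (by positivity), ENNReal.ofReal_mul (by positivity)]

end Coefficients

theorem cauchy_estimate (n : ℕ) (s α : ℝ) (hs : 0 < s) (hα0 : 0 < α) (hα1 : α < 1)
    (f : (Fin n → ℤ) → ℂ) (φ : (Fin n → ℤ) → (Fin n → ℂ))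
    (hf : Summable fun k : Fin n → ℤ => ‖f k‖ ^ 2 * wt (2 * s) k)
    (hφ : Summable fun k : Fin n → ℤ => ‖φ k‖ * Real.exp (s * l1 k)) :
    stripL2 (fun m => ∑' l : Fin n → ℤ,
        Complex.I * (∑ j, ((m - l) j : ℂ) * φ l j) * f (m - l)) (α * s)
      ≤ (1 / (Real.exp 1 * α ^ ((n : ℝ) / 2))) * (1 / ((1 - α) * s)) *
        stripL2 f s * (∑' k : Fin n → ℤ, ‖φ k‖ * Real.exp (s * l1 k)) := by
  set K := 1 / (Real.exp 1 * α ^ ((n : ℝ) / 2)) * (1 / ((1 - α) * s))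
  set g := fun m => ∑' l : Fin n → ℤ, Complex.I * (∑ j, ((m - l) j : ℂ) * φ l j) * f (m - l)
  set F := fun k => ENNReal.ofReal (‖f k‖ * √(wt (2 * s) k))
  set w := fun l => ENNReal.ofReal (‖φ l‖ * Real.exp (s * l1 l))
  have hF : ∑' k, F k ^ 2 = ENNReal.ofReal (stripL2 f s ^ 2) := by
    rw [ofReal_stripL2_sq hf]
    exact tsum_congr fun k => (ofReal_norm_sq_mul_wt _ _ _).symm
  have hw : ∑' l, w l = ENNReal.ofReal (∑' l, ‖φ l‖ * Real.exp (s * l1 l)) :=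
    (ENNReal.ofReal_tsum_of_nonneg (fun l => by positivity) hφ).symm
  have hK : 0 ≤ K := by positivity
  have hB : 0 ≤ ∑' l, ‖φ l‖ * Real.exp (s * l1 l) := tsum_nonneg fun l => by positivity
  refine stripL2_le_of_tsum_ofReal_le
    (mul_nonneg (mul_nonneg hK (Real.sqrt_nonneg _)) hB) ?_
  calc ∑' m, ENNReal.ofReal (‖g m‖ ^ 2 * wt (2 * (α * s)) m)
      = ∑' m, ENNReal.ofReal (‖g m‖ * √(wt (2 * (α * s)) m)) ^ 2 :=
        tsum_congr fun m => ofReal_norm_sq_mul_wt _ _ _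
    _ ≤ ∑' m, (ENNReal.ofReal K * ∑' l, F (m - l) * w l) ^ 2 := by
        gcongr with m
        exact ofReal_norm_conv_mul_sqrt_wt_le (l1_mul_sqrt_wt_add_le hs hα0 hα1) f φ m
    _ = ENNReal.ofReal K ^ 2 * ∑' m, (∑' l, F (m - l) * w l) ^ 2 := by
        simp_rw [mul_pow, ENNReal.tsum_mul_left]
    _ ≤ ENNReal.ofReal K ^ 2 * ((∑' k, F k ^ 2) * (∑' l, w l) ^ 2) := by
        gcongr
        exact ENNReal.tsum_convolution_sq_le F w
    _ = ENNReal.ofReal ((K * stripL2 f s * ∑' l, ‖φ l‖ * Real.exp (s * l1 l)) ^ 2) := by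
        rw [hF, hw, ← ENNReal.ofReal_pow hB, ← ENNReal.ofReal_pow hK,
          ← ENNReal.ofReal_mul (sq_nonneg _), ← ENNReal.ofReal_mul (sq_nonneg _)]
        ring_nf

end
end

section
/- Let ω ∈ ℝⁿ satisfy |⟨k,ω⟩| ≥ |k|^{−τ} for all nonzero k ∈ ℤⁿ, with τ ≥ n−1. Then for K ≥ 1, Ω := max_{0<|k|≤K} |⟨k,ω⟩|^{−1} ≤ K^τ, and hence the small-divisor solution operator L on trigonometric polynomials of order K with zero mean satisfies K‖Lf‖_s ≤ 2^{n+1} e^{sK} K^{τ+1} ⫴f⫴_s. -/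
open scoped BigOperators

noncomputable section

/-!
Since every weight `w_k(2s)` is at least `1`, Cauchy–Schwarz reduces the estimate to Rüssmann's
bound `∑_{0<|k|≤K} ⟨k,ω⟩⁻² ≤ 4 · 3ⁿ Ω²`, where `Ω ≥ |⟨k,ω⟩|⁻¹` on the punctured ball; the
diophantine condition gives `Ω = K^τ`. For Rüssmann's bound, sort the `k` by the integer part
`j` of `Ω |⟨k,ω⟩| ≥ 1` and by the sign of `⟨k,ω⟩`. Two distinct `k, k'` in one class satisfy
`|⟨k - k', ω⟩| < Ω⁻¹`, so `|k - k'| > K`; disjoint `ℓ¹`-balls of radius `K/2` around them fit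
into the ball of radius `3K/2`, so a class has at most `3ⁿ` elements, each contributing at most
`Ω² / j²`, and `∑ 1/j² ≤ 2`.
-/

open Finset

section Packing

open MeasureTheory Metric Module

theorem card_mul_pow_le_of_norm_le_of_separated {E : Type*} [NormedAddCommGroup E]
    [NormedSpace ℝ E] [FiniteDimensional ℝ E] (S : Finset E) {R r : ℝ} (hR : 0 ≤ R) (hr : 0 < r)
    (hS : ∀ x ∈ S, ‖x‖ ≤ R) (hsep : ∀ x ∈ S, ∀ y ∈ S, x ≠ y → 2 * r ≤ ‖x - y‖) :
    (#S : ℝ) * r ^ finrank ℝ E ≤ (R + r) ^ finrank ℝ E := by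
  have hRr : 0 < R + r := by linarith
  borelize E
  let μ : Measure E := Measure.addHaar
  have hdisj : (S : Set E).PairwiseDisjoint fun x => ball x r := by
    intro x hx y hy hxy
    refine Set.disjoint_left.2 fun z hzx hzy => ?_
    rw [mem_ball_iff_norm'] at hzx
    rw [mem_ball_iff_norm] at hzy
    linarith [hsep x hx y hy hxy, norm_sub_le_norm_sub_add_norm_sub x z y]
  have hsub : (⋃ x ∈ S, ball x r) ⊆ ball 0 (R + r) := by
    refine Set.iUnion₂_subset fun x hx z hz => ?_
    rw [mem_ball_zero_iff]
    rw [mem_ball_iff_norm] at hz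
    linarith [norm_le_norm_sub_add z x, hS x hx]
  have hvol : (#S : ENNReal) * (ENNReal.ofReal (r ^ finrank ℝ E) * μ (ball 0 1))
      ≤ ENNReal.ofReal ((R + r) ^ finrank ℝ E) * μ (ball 0 1) :=
    calc (#S : ENNReal) * (ENNReal.ofReal (r ^ finrank ℝ E) * μ (ball 0 1))
        = ∑ x ∈ S, μ (ball x r) := by
          simp only [μ.addHaar_ball_of_pos _ hr, sum_const, nsmul_eq_mul]
      _ = μ (⋃ x ∈ S, ball x r) :=
          (measure_biUnion_finset hdisj fun x _ => measurableSet_ball).symm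
      _ ≤ μ (ball 0 (R + r)) := measure_mono hsub
      _ = _ := μ.addHaar_ball_of_pos _ hRr
  rwa [← mul_assoc, ENNReal.mul_le_mul_iff_left (measure_ball_pos μ 0 one_pos).ne'
    measure_ball_lt_top.ne, ← ENNReal.ofReal_natCast, ← ENNReal.ofReal_mul (by positivity),
    ENNReal.ofReal_le_ofReal_iff (by positivity)] at hvol

end Packing

theorem abs_le_l1 {n : ℕ} (k : Fin n → ℤ) (i : Fin n) : |(k i : ℝ)| ≤ l1 k :=
  single_le_sum (f := fun j => |(k j : ℝ)|) (fun _ _ => abs_nonneg _) (mem_univ i)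

theorem l1_pos_iff {n : ℕ} {k : Fin n → ℤ} : 0 < l1 k ↔ k ≠ 0 := by
  refine ⟨by rintro h rfl; simp [l1] at h, fun hk => ?_⟩
  obtain ⟨i, hi⟩ := Function.ne_iff.1 hk
  exact (abs_pos.2 (Int.cast_ne_zero.2 hi)).trans_le (abs_le_l1 k i)

def toL1 {n : ℕ} (k : Fin n → ℤ) : PiLp 1 (fun _ : Fin n => ℝ) := WithLp.toLp 1 fun i => (k i : ℝ)

theorem norm_toL1 {n : ℕ} (k : Fin n → ℤ) : ‖toL1 k‖ = l1 k := by
  simp [toL1, PiLp.norm_eq_of_L1, l1]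

theorem toL1_sub {n : ℕ} (k k' : Fin n → ℤ) : toL1 (k - k') = toL1 k - toL1 k' := by
  ext i; simp [toL1]

theorem toL1_injective {n : ℕ} : Function.Injective (toL1 (n := n)) := fun k k' h => by
  ext i; simpa [toL1] using congrFun (congrArg WithLp.ofLp h) i

theorem card_le_three_pow_of_l1_separated {n : ℕ} (S : Finset (Fin n → ℤ)) {K : ℝ} (hK : 0 < K)
    (hS : ∀ k ∈ S, l1 k ≤ K) (hsep : ∀ k ∈ S, ∀ k' ∈ S, k ≠ k' → K ≤ l1 (k - k')) :
    #S ≤ 3 ^ n := by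
  have hdim : Module.finrank ℝ (PiLp 1 (fun _ : Fin n => ℝ)) = n := by
    rw [(WithLp.linearEquiv 1 ℝ (Fin n → ℝ)).finrank_eq, Module.finrank_fin_fun]
  have hvol := card_mul_pow_le_of_norm_le_of_separated (S.image toL1) hK.le (half_pos hK)
    (by simpa [norm_toL1] using hS)
    (by simpa [← toL1_sub, norm_toL1, toL1_injective.eq_iff, mul_div_cancel₀] using hsep)
  rw [card_image_of_injective _ toL1_injective, hdim, show K + K / 2 = 3 * (K / 2) by ring,
    mul_pow] at hvol
  exact_mod_cast le_of_mul_le_mul_right hvol (by positivity)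

theorem sum_inv_sq_le_two_mul_of_one_le {ι : Type*} (A : Finset ι) (f : ι → ℝ) (N : ℕ)
    (hf : ∀ k ∈ A, 1 ≤ f k)
    (hN : ∀ B ⊆ A, (∀ k ∈ B, ∀ k' ∈ B, |f k - f k'| < 1) → #B ≤ N) :
    ∑ k ∈ A, (f k ^ 2)⁻¹ ≤ 2 * N := by
  classical
  set M := A.sup (fun k => ⌊f k⌋₊) + 1
  have hmaps : ∀ k ∈ A, ⌊f k⌋₊ ∈ Ioo 0 M := fun k hk =>
    mem_Ioo.2 ⟨Nat.floor_pos.2 (hf k hk), Nat.lt_succ_of_le (le_sup (f := fun k => ⌊f k⌋₊) hk)⟩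
  have hfiber : ∀ j ∈ Ioo 0 M, ∑ k ∈ A with ⌊f k⌋₊ = j, (f k ^ 2)⁻¹ ≤ N * ((j : ℝ) ^ 2)⁻¹ := by
    intro j hj
    have hj0 : (0 : ℝ) < j := by exact_mod_cast (mem_Ioo.1 hj).1
    have hlayer : ∀ k ∈ {k ∈ A | ⌊f k⌋₊ = j}, (j : ℝ) ≤ f k ∧ f k < j + 1 := fun k hk =>
      (Nat.floor_eq_iff (by linarith [hf k (mem_filter.1 hk).1])).1 (mem_filter.1 hk).2
    have hcard : #{k ∈ A | ⌊f k⌋₊ = j} ≤ N := hN _ (filter_subset _ _) fun k hk k' hk' => by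
      obtain ⟨h1, h2⟩ := hlayer k hk
      obtain ⟨h3, h4⟩ := hlayer k' hk'
      rw [abs_lt]; constructor <;> linarith
    calc ∑ k ∈ A with ⌊f k⌋₊ = j, (f k ^ 2)⁻¹
        ≤ #{k ∈ A | ⌊f k⌋₊ = j} • ((j : ℝ) ^ 2)⁻¹ :=
          sum_le_card_nsmul _ _ _ fun k hk => by gcongr; exact (hlayer k hk).1
      _ ≤ N * ((j : ℝ) ^ 2)⁻¹ := by rw [nsmul_eq_mul]; gcongr
  calc ∑ k ∈ A, (f k ^ 2)⁻¹ = ∑ j ∈ Ioo 0 M, ∑ k ∈ A with ⌊f k⌋₊ = j, (f k ^ 2)⁻¹ :=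
        (sum_fiberwise_of_maps_to hmaps _).symm
    _ ≤ ∑ j ∈ Ioo 0 M, N * ((j : ℝ) ^ 2)⁻¹ := sum_le_sum hfiber
    _ ≤ N * 2 := by
        rw [← mul_sum]
        gcongr
        simpa using sum_Ioo_inv_sq_le (α := ℝ) 0 M
    _ = 2 * N := mul_comm _ _

theorem sum_inv_sq_le_four_mul_of_one_le_abs {ι : Type*} (A : Finset ι) (f : ι → ℝ) (N : ℕ)
    (hf : ∀ k ∈ A, 1 ≤ |f k|)
    (hN : ∀ B ⊆ A, (∀ k ∈ B, ∀ k' ∈ B, |f k - f k'| < 1) → #B ≤ N) :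
    ∑ k ∈ A, (f k ^ 2)⁻¹ ≤ 4 * N := by
  classical
  have hpos := sum_inv_sq_le_two_mul_of_one_le {k ∈ A | 0 < f k} f N
    (fun k hk => by
      obtain ⟨hkA, hk0⟩ := mem_filter.1 hk
      simpa [abs_of_pos hk0] using hf k hkA)
    fun B hB => hN B (hB.trans (filter_subset _ _))
  have hneg := sum_inv_sq_le_two_mul_of_one_le {k ∈ A | ¬0 < f k} (-f) N
    (fun k hk => by
      obtain ⟨hkA, hk0⟩ := mem_filter.1 hk
      simpa [abs_of_nonpos (not_lt.1 hk0)] using hf k hkA)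
    fun B hB hB1 => hN B (hB.trans (filter_subset _ _)) fun k hk k' hk' => by
      have := hB1 k hk k' hk'
      rwa [Pi.neg_apply, Pi.neg_apply, neg_sub_neg, abs_sub_comm] at this
  simp only [Pi.neg_apply, neg_sq] at hneg
  rw [← sum_filter_add_sum_filter_not A (fun k => 0 < f k)]
  linarith

theorem sum_inv_sq_le_of_one_le_mul_abs {n : ℕ} (ω : Fin n → ℝ) {K Ω : ℝ} (hK : 0 < K)
    (hΩ : ∀ k : Fin n → ℤ, 0 < l1 k → l1 k ≤ K → 1 ≤ Ω * |∑ i, (k i : ℝ) * ω i|)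
    (A : Finset (Fin n → ℤ)) (hA : ∀ k ∈ A, 0 < l1 k ∧ l1 k ≤ K) :
    ∑ k ∈ A, ((∑ i, (k i : ℝ) * ω i) ^ 2)⁻¹ ≤ 4 * 3 ^ n * Ω ^ 2 := by
  set x : (Fin n → ℤ) → ℝ := fun k => ∑ i, (k i : ℝ) * ω i
  have hx_sub : ∀ k k', x (k - k') = x k - x k' := fun k k' => by
    simp [x, sub_mul, sum_sub_distrib]
  have hΩx : ∀ k ∈ A, 1 ≤ |Ω * x k| := fun k hk =>
    (hΩ k (hA k hk).1 (hA k hk).2).trans (by rw [abs_mul]; gcongr; exact le_abs_self Ω)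
  have hclasses : ∀ B ⊆ A, (∀ k ∈ B, ∀ k' ∈ B, |Ω * x k - Ω * x k'| < 1) → #B ≤ 3 ^ n := by
    refine fun B hB hclose => card_le_three_pow_of_l1_separated B hK
      (fun k hk => (hA k (hB hk)).2) fun k hk k' hk' hne => ?_
    by_contra! hlt
    have hdiv := hΩ (k - k') (l1_pos_iff.2 (sub_ne_zero.2 hne)) hlt.le
    have hΩ_le : Ω * |x (k - k')| ≤ |Ω * x k - Ω * x k'| := by
      rw [← mul_sub, ← hx_sub, abs_mul]; gcongr; exact le_abs_self Ω
    linarith [hclose k hk k' hk']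
  calc ∑ k ∈ A, (x k ^ 2)⁻¹ = Ω ^ 2 * ∑ k ∈ A, ((Ω * x k) ^ 2)⁻¹ := by
        rw [mul_sum]
        refine sum_congr rfl fun k hk => ?_
        have hΩ0 : Ω ≠ 0 := by
          have h1 := hΩx k hk
          rintro rfl
          norm_num at h1
        rw [mul_pow, mul_inv, ← mul_assoc, mul_inv_cancel₀ (pow_ne_zero 2 hΩ0), one_mul]
    _ ≤ Ω ^ 2 * (4 * 3 ^ n) := by
        gcongr
        exact_mod_cast sum_inv_sq_le_four_mul_of_one_le_abs A _ _ hΩx hclasses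
    _ = 4 * 3 ^ n * Ω ^ 2 := mul_comm _ _

theorem one_le_rpow_mul_of_rpow_neg_le {a K τ y : ℝ} (ha : 0 < a) (haK : a ≤ K) (hτ : 0 ≤ τ)
    (hy : a ^ (-τ) ≤ y) : 1 ≤ K ^ τ * y :=
  calc 1 = a ^ τ * a ^ (-τ) := by
        rw [Real.rpow_neg ha.le, mul_inv_cancel₀ (Real.rpow_pos_of_pos ha τ).ne']
    _ ≤ K ^ τ * y := mul_le_mul (Real.rpow_le_rpow ha.le haK hτ) hy (by positivity)
        (Real.rpow_nonneg (ha.le.trans haK) τ)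

theorem sum_mul_le_sqrt_mul_sqrt_of_pos {ι : Type*} (s : Finset ι) (f g w : ι → ℝ)
    (hw : ∀ i ∈ s, 0 < w i) :
    ∑ i ∈ s, f i * g i ≤ √(∑ i ∈ s, f i ^ 2 * w i) * √(∑ i ∈ s, g i ^ 2 / w i) :=
  calc ∑ i ∈ s, f i * g i = ∑ i ∈ s, (f i * √(w i)) * (g i / √(w i)) :=
        sum_congr rfl fun i hi => by field_simp [(Real.sqrt_pos.2 (hw i hi)).ne']
    _ ≤ √(∑ i ∈ s, (f i * √(w i)) ^ 2) * √(∑ i ∈ s, (g i / √(w i)) ^ 2) :=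
        Real.sum_mul_le_sqrt_mul_sqrt _ _ _
    _ = _ := by
        congr 2 <;> refine sum_congr rfl fun i hi => ?_
        · rw [mul_pow, Real.sq_sqrt (hw i hi).le]
        · rw [div_pow, Real.sq_sqrt (hw i hi).le]

theorem one_le_sr (x : ℝ) : 1 ≤ sr x := by
  unfold sr
  split_ifs with hx
  · rfl
  rcases Ne.lt_or_gt hx with h | h
  · rw [le_div_iff_of_neg h, one_mul]; exact Real.sinh_le_self_iff.2 h.le
  · rw [le_div_iff₀ h, one_mul]; exact Real.self_le_sinh_iff.2 h.le

theorem one_le_wt {n : ℕ} (t : ℝ) (k : Fin n → ℤ) : 1 ≤ wt t k :=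
  one_le_prod fun _ _ => one_le_sr _

theorem wiener_le_of_norm_le_mul {n : ℕ} {c F : (Fin n → ℤ) → ℂ} {d : (Fin n → ℤ) → ℝ}
    {A : Finset (Fin n → ℤ)} {K s : ℝ} (hs : 0 ≤ s) (hA : ∀ k ∈ A, l1 k ≤ K)
    (hc : ∀ k ∉ A, c k = 0) (hF : ∀ k, ‖F k‖ ≤ ‖c k‖ * d k) :
    wiener F s ≤ Real.exp (s * K) * √(∑ k ∈ A, d k ^ 2) * stripL2 c s := by
  have hFA : ∀ k ∉ A, F k = 0 := fun k hk =>
    norm_le_zero_iff.1 (by simpa [hc k hk] using hF k)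
  rw [wiener, tsum_eq_sum fun k hk => by simp [hFA k hk], stripL2,
    tsum_eq_sum fun k hk => by simp [hc k hk]]
  have hdecay : √(∑ k ∈ A, (d k * Real.exp (s * l1 k)) ^ 2 / wt (2 * s) k)
      ≤ Real.exp (s * K) * √(∑ k ∈ A, d k ^ 2) := by
    rw [← Real.sqrt_sq (Real.exp_pos (s * K)).le, ← Real.sqrt_mul (by positivity), mul_sum]
    refine Real.sqrt_le_sqrt (sum_le_sum fun k hk => ?_)
    calc (d k * Real.exp (s * l1 k)) ^ 2 / wt (2 * s) k ≤ (d k * Real.exp (s * l1 k)) ^ 2 :=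
          div_le_self (sq_nonneg _) (one_le_wt _ _)
      _ ≤ (d k * Real.exp (s * K)) ^ 2 := by
          rw [mul_pow, mul_pow]; gcongr; exact hA k hk
      _ = Real.exp (s * K) ^ 2 * d k ^ 2 := by ring
  calc ∑ k ∈ A, ‖F k‖ * Real.exp (s * l1 k)
      ≤ ∑ k ∈ A, ‖c k‖ * (d k * Real.exp (s * l1 k)) :=
        sum_le_sum fun k _ => by rw [← mul_assoc]; gcongr; exact hF k
    _ ≤ √(∑ k ∈ A, ‖c k‖ ^ 2 * wt (2 * s) k) *
          √(∑ k ∈ A, (d k * Real.exp (s * l1 k)) ^ 2 / wt (2 * s) k) :=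
        sum_mul_le_sqrt_mul_sqrt_of_pos _ _ _ _ fun k _ => zero_lt_one.trans_le (one_le_wt _ _)
    _ ≤ √(∑ k ∈ A, ‖c k‖ ^ 2 * wt (2 * s) k) * (Real.exp (s * K) * √(∑ k ∈ A, d k ^ 2)) := by
        gcongr
    _ = _ := mul_comm _ _

def l1PuncturedBall (n K : ℕ) : Finset (Fin n → ℤ) :=
  {k ∈ Fintype.piFinset fun _ => Icc (-(K : ℤ)) K | 0 < l1 k ∧ l1 k ≤ K}

theorem mem_l1PuncturedBall {n K : ℕ} {k : Fin n → ℤ} :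
    k ∈ l1PuncturedBall n K ↔ 0 < l1 k ∧ l1 k ≤ K := by
  simp only [l1PuncturedBall, mem_filter, Fintype.mem_piFinset, mem_Icc, and_iff_right_iff_imp]
  rintro ⟨-, hK⟩ i
  have : |(k i : ℝ)| ≤ K := (abs_le_l1 k i).trans hK
  exact abs_le.1 (by exact_mod_cast this)

/-- The operator `L` of the paper, on coefficients of order at most `K`. -/
def smallDivisorSolution {n : ℕ} (ω : Fin n → ℝ) (K : ℕ) (c : (Fin n → ℤ) → ℂ) :
    (Fin n → ℤ) → ℂ :=
  fun k => if 0 < l1 k ∧ l1 k ≤ K then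
    c k / (Complex.I * ((∑ i, (k i : ℝ) * ω i : ℝ) : ℂ)) else 0

theorem norm_smallDivisorSolution_le {n : ℕ} (ω : Fin n → ℝ) (K : ℕ) (c : (Fin n → ℤ) → ℂ)
    (k : Fin n → ℤ) :
    ‖smallDivisorSolution ω K c k‖ ≤ ‖c k‖ * |∑ i, (k i : ℝ) * ω i|⁻¹ := by
  unfold smallDivisorSolution
  split_ifs
  · rw [norm_div, norm_mul, Complex.norm_I, one_mul, Complex.norm_real, Real.norm_eq_abs,
      div_eq_mul_inv]
  · rw [norm_zero]; positivity

theorem wiener_smallDivisorSolution_le {n K : ℕ} (ω : Fin n → ℝ) {Ω s : ℝ} (hK : 0 < K)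
    (hs : 0 ≤ s) (hΩ0 : 0 ≤ Ω)
    (hΩ : ∀ k : Fin n → ℤ, 0 < l1 k → l1 k ≤ K → 1 ≤ Ω * |∑ i, (k i : ℝ) * ω i|)
    (c : (Fin n → ℤ) → ℂ) (hc : ∀ k, c k ≠ 0 → 0 < l1 k ∧ l1 k ≤ K) :
    wiener (smallDivisorSolution ω K c) s
      ≤ 2 ^ (n + 1) * Real.exp (s * K) * Ω * stripL2 c s := by
  have hsum : √(∑ k ∈ l1PuncturedBall n K, |∑ i, (k i : ℝ) * ω i|⁻¹ ^ 2) ≤ 2 ^ (n + 1) * Ω := by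
    rw [Real.sqrt_le_left (by positivity)]
    calc ∑ k ∈ l1PuncturedBall n K, |∑ i, (k i : ℝ) * ω i|⁻¹ ^ 2
        = ∑ k ∈ l1PuncturedBall n K, ((∑ i, (k i : ℝ) * ω i) ^ 2)⁻¹ := by
          simp only [inv_pow, sq_abs]
      _ ≤ 4 * 3 ^ n * Ω ^ 2 :=
          sum_inv_sq_le_of_one_le_mul_abs ω (by exact_mod_cast hK) hΩ _
            fun k hk => mem_l1PuncturedBall.1 hk
      _ ≤ 4 * (2 ^ n) ^ 2 * Ω ^ 2 := by
          rw [← pow_mul, mul_comm n, pow_mul]; gcongr; norm_num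
      _ = (2 ^ (n + 1) * Ω) ^ 2 := by ring
  calc wiener (smallDivisorSolution ω K c) s
      ≤ Real.exp (s * K) * √(∑ k ∈ l1PuncturedBall n K, |∑ i, (k i : ℝ) * ω i|⁻¹ ^ 2) *
          stripL2 c s :=
        wiener_le_of_norm_le_mul hs (fun k hk => (mem_l1PuncturedBall.1 hk).2)
          (fun k hk => by_contra fun h => hk (mem_l1PuncturedBall.2 (hc k h)))
          (norm_smallDivisorSolution_le ω K c)
    _ ≤ Real.exp (s * K) * (2 ^ (n + 1) * Ω) * stripL2 c s := by
        gcongr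
        exact Real.sqrt_nonneg _
    _ = 2 ^ (n + 1) * Real.exp (s * K) * Ω * stripL2 c s := by ring

theorem diophantine_small_divisor (n K : ℕ) (hn : 1 ≤ n) (hK : 1 ≤ K) (s τ : ℝ) (hs : 0 ≤ s)
    (hτ : (n : ℝ) - 1 ≤ τ) (ω : Fin n → ℝ)
    (hdio : ∀ k : Fin n → ℤ, k ≠ 0 → (l1 k) ^ (-τ) ≤ |∑ i, (k i : ℝ) * ω i|) :
    (∀ k : Fin n → ℤ, 0 < l1 k → l1 k ≤ K → |∑ i, (k i : ℝ) * ω i|⁻¹ ≤ (K : ℝ) ^ τ) ∧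
    ∀ c : (Fin n → ℤ) → ℂ, (∀ k, c k ≠ 0 → 0 < l1 k ∧ l1 k ≤ K) →
      (K : ℝ) * wiener (fun k => if 0 < l1 k ∧ l1 k ≤ K then
          c k / (Complex.I * ((∑ i, (k i : ℝ) * ω i : ℝ) : ℂ)) else 0) s
        ≤ (2 : ℝ) ^ (n + 1) * Real.exp (s * K) * (K : ℝ) ^ (τ + 1) * stripL2 c s := by
  have hτ0 : 0 ≤ τ := by linarith [show (1 : ℝ) ≤ n by exact_mod_cast hn]
  have hΩ : ∀ k : Fin n → ℤ, 0 < l1 k → l1 k ≤ K → 1 ≤ (K : ℝ) ^ τ * |∑ i, (k i : ℝ) * ω i| :=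
    fun k hk hkK => one_le_rpow_mul_of_rpow_neg_le hk hkK hτ0 (hdio k (l1_pos_iff.1 hk))
  refine ⟨fun k hk hkK => ?_, fun c hc => ?_⟩
  · have hx := pos_of_mul_pos_right (one_pos.trans_le (hΩ k hk hkK)) (by positivity)
    exact (inv_le_iff_one_le_mul₀ hx).2 (hΩ k hk hkK)
  calc (K : ℝ) * wiener (smallDivisorSolution ω K c) s
      ≤ K * (2 ^ (n + 1) * Real.exp (s * K) * (K : ℝ) ^ τ * stripL2 c s) := by
        gcongr
        exact wiener_smallDivisorSolution_le ω hK hs (by positivity) hΩ c hc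
    _ = _ := by rw [Real.rpow_add_one (by positivity)]; ring
end
end
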